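/- arXiv:1911.05888 — 2 statements merged into one kernel-verified Lean document; each statement's English description precedes it below -/
import Mathlib

section
/- Let A be an n×n real symmetric positive semidefinite matrix, E an m×m real symmetric positive semidefinite matrix, and B an n×m real matrix, and let 𝒜 = [[A, B], [Bᵀ, −E]] be the associated symmetric saddle point matrix. Then a pair (u, p) ∈ ℝⁿ × ℝᵐ satisfies 𝒜(u, p) = 0 if and only if A u = 0, E p = 0, B p = 0, and Bᵀ u = 0. In particular, the kernel of 𝒜 is the product of the set {u : Au = 0, Bᵀu = 0} with the set {p : Ep = 0, Bp = 0}. -/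
open Matrix

/-!
Pairing `𝒜 (u, p)` with `(u, -p)` cancels the two coupling terms `uᵀ B p` and gives
`uᵀ A u + pᵀ E p`. If `𝒜 (u, p) = 0`, both (nonnegative) quadratic forms therefore vanish, so
`A u = 0` and `E p = 0` by positive semidefiniteness, and the two block rows of `𝒜 (u, p) = 0`
then reduce to `B p = 0` and `Bᵀ u = 0`.
-/

namespace Matrix

variable {ι κ : Type*} [Fintype ι] [Fintype κ]

theorem fromBlocks_mulVec_sumElim_eq_zero_iff {A : Matrix ι ι ℝ} {B : Matrix ι κ ℝ}
    {C : Matrix κ ι ℝ} {D : Matrix κ κ ℝ} {u : ι → ℝ} {p : κ → ℝ} :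
    fromBlocks A B C D *ᵥ Sum.elim u p = 0 ↔ A *ᵥ u + B *ᵥ p = 0 ∧ C *ᵥ u + D *ᵥ p = 0 := by
  rw [fromBlocks_mulVec, Sum.elim_comp_inl, Sum.elim_comp_inr, ← Sum.elim_zero_zero,
    Sum.elim_eq_iff]

theorem sumElim_neg_dotProduct_saddle_mulVec (A : Matrix ι ι ℝ) (B : Matrix ι κ ℝ)
    (E : Matrix κ κ ℝ) (u : ι → ℝ) (p : κ → ℝ) :
    Sum.elim u (-p) ⬝ᵥ fromBlocks A B Bᵀ (-E) *ᵥ Sum.elim u p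
      = u ⬝ᵥ A *ᵥ u + p ⬝ᵥ E *ᵥ p := by
  have coupling : p ⬝ᵥ Bᵀ *ᵥ u = u ⬝ᵥ B *ᵥ p := by
    rw [mulVec_transpose, dotProduct_comm, dotProduct_mulVec]
  rw [fromBlocks_mulVec, Sum.elim_comp_inl, Sum.elim_comp_inr, sumElim_dotProduct_sumElim,
    dotProduct_add, neg_dotProduct, dotProduct_add, coupling, neg_mulVec, dotProduct_neg]
  ring

theorem PosSemidef.mulVec_eq_zero_of_dotProduct_add_eq_zero {A : Matrix ι ι ℝ}
    {E : Matrix κ κ ℝ} (hA : A.PosSemidef) (hE : E.PosSemidef) {u : ι → ℝ} {p : κ → ℝ}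
    (h : u ⬝ᵥ A *ᵥ u + p ⬝ᵥ E *ᵥ p = 0) : A *ᵥ u = 0 ∧ E *ᵥ p = 0 := by
  have hu : 0 ≤ u ⬝ᵥ A *ᵥ u := by simpa using hA.dotProduct_mulVec_nonneg u
  have hp : 0 ≤ p ⬝ᵥ E *ᵥ p := by simpa using hE.dotProduct_mulVec_nonneg p
  exact ⟨(hA.dotProduct_mulVec_zero_iff u).mp (by simp only [star_trivial]; linarith),
    (hE.dotProduct_mulVec_zero_iff p).mp (by simp only [star_trivial]; linarith)⟩

theorem saddle_mulVec_sumElim_eq_zero_iff {A : Matrix ι ι ℝ} {E : Matrix κ κ ℝ}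
    (hA : A.PosSemidef) (hE : E.PosSemidef) (B : Matrix ι κ ℝ) (u : ι → ℝ) (p : κ → ℝ) :
    fromBlocks A B Bᵀ (-E) *ᵥ Sum.elim u p = 0 ↔
      A *ᵥ u = 0 ∧ E *ᵥ p = 0 ∧ B *ᵥ p = 0 ∧ Bᵀ *ᵥ u = 0 := by
  rw [fromBlocks_mulVec_sumElim_eq_zero_iff]
  constructor
  · intro hrows
    have hforms : u ⬝ᵥ A *ᵥ u + p ⬝ᵥ E *ᵥ p = 0 := by
      rw [← sumElim_neg_dotProduct_saddle_mulVec A B E,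
        fromBlocks_mulVec_sumElim_eq_zero_iff.mpr hrows, dotProduct_zero]
    obtain ⟨hAu, hEp⟩ := hA.mulVec_eq_zero_of_dotProduct_add_eq_zero hE hforms
    obtain ⟨hrow₁, hrow₂⟩ := hrows
    rw [hAu, zero_add] at hrow₁
    rw [neg_mulVec, hEp, neg_zero, add_zero] at hrow₂
    exact ⟨hAu, hEp, hrow₁, hrow₂⟩
  · rintro ⟨hAu, hEp, hBp, hBu⟩
    simp [hAu, hBp, hBu, neg_mulVec, hEp]

end Matrix

theorem saddle_point_kernel_general (n m : ℕ)
    (A : Matrix (Fin n) (Fin n) ℝ) (E : Matrix (Fin m) (Fin m) ℝ)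
    (B : Matrix (Fin n) (Fin m) ℝ)
    (hA : A.PosSemidef) (hE : E.PosSemidef) :
    (∀ (u : Fin n → ℝ) (p : Fin m → ℝ),
      (Matrix.fromBlocks A B Bᵀ (-E)).mulVec (Sum.elim u p) = 0 ↔
        (A.mulVec u = 0 ∧ E.mulVec p = 0 ∧ B.mulVec p = 0 ∧ Bᵀ.mulVec u = 0))
    ∧ {x : (Fin n ⊕ Fin m) → ℝ | (Matrix.fromBlocks A B Bᵀ (-E)).mulVec x = 0}
      = {x | (A.mulVec (x ∘ Sum.inl) = 0 ∧ Bᵀ.mulVec (x ∘ Sum.inl) = 0)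
           ∧ (E.mulVec (x ∘ Sum.inr) = 0 ∧ B.mulVec (x ∘ Sum.inr) = 0)} := by
  refine ⟨saddle_mulVec_sumElim_eq_zero_iff hA hE B, Set.ext fun x => ?_⟩
  rw [Set.mem_ofPred_eq, Set.mem_ofPred_eq, ← Sum.elim_comp_inl_inr x,
    saddle_mulVec_sumElim_eq_zero_iff hA hE B, Sum.elim_comp_inl, Sum.elim_comp_inr]
  tauto

/-- For the symmetric saddle point matrix 𝒜 = [[A, B], [Bᵀ, −E]] with A, E
symmetric positive semidefinite, (u, p) is in the kernel of 𝒜 iff Au = 0, Ep = 0, Bp = 0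
and Bᵀu = 0; in particular the kernel of 𝒜 is the product of the corresponding sets. -/
theorem saddle_point_kernel (n m : ℕ) (hn : 0 < n) (hm : 0 < m)
    (A : Matrix (Fin n) (Fin n) ℝ) (E : Matrix (Fin m) (Fin m) ℝ)
    (B : Matrix (Fin n) (Fin m) ℝ)
    (hA : A.PosSemidef) (hE : E.PosSemidef) :
    (∀ (u : Fin n → ℝ) (p : Fin m → ℝ),
      (Matrix.fromBlocks A B Bᵀ (-E)).mulVec (Sum.elim u p) = 0 ↔
        (A.mulVec u = 0 ∧ E.mulVec p = 0 ∧ B.mulVec p = 0 ∧ Bᵀ.mulVec u = 0))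
    ∧ {x : (Fin n ⊕ Fin m) → ℝ | (Matrix.fromBlocks A B Bᵀ (-E)).mulVec x = 0}
      = {x | (A.mulVec (x ∘ Sum.inl) = 0 ∧ Bᵀ.mulVec (x ∘ Sum.inl) = 0)
           ∧ (E.mulVec (x ∘ Sum.inr) = 0 ∧ B.mulVec (x ∘ Sum.inr) = 0)} :=
  saddle_point_kernel_general n m A E B hA hE
end

section
/- Let A be an n×n real symmetric positive definite matrix, E an m×m real symmetric positive semidefinite matrix, and B an n×m real matrix, and let 𝒜 = [[A, B], [Bᵀ, −E]] be the associated symmetric saddle point matrix. Then the following are equivalent: (i) 𝒜 is invertible; (ii) the Schur complement E + Bᵀ A⁻¹ B is positive definite; (iii) there is no nonzero p ∈ ℝᵐ with E p = 0 and B p = 0. -/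
/-!
By the Schur complement formula, `fromBlocks A B Bᵀ (-E)` is invertible iff `S = E + Bᵀ A⁻¹ B` is.
Since `S` is positive semidefinite, it is invertible iff it is positive definite, iff its kernel
is trivial. The kernel of a sum of positive semidefinite matrices is the intersection of their
kernels, and `Bᵀ A⁻¹ B` has the same kernel as `B` because `A⁻¹` is positive definite.
-/

open Matrix ComplexOrder

namespace Matrix

variable {m n 𝕜 : Type*} [Fintype m] [Fintype n] [RCLike 𝕜]

theorem PosSemidef.add_mulVec_eq_zero_iff {P Q : Matrix n n 𝕜} (hP : P.PosSemidef)
    (hQ : Q.PosSemidef) (x : n → 𝕜) :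
    (P + Q) *ᵥ x = 0 ↔ P *ᵥ x = 0 ∧ Q *ᵥ x = 0 := by
  rw [← (hP.add hQ).dotProduct_mulVec_zero_iff, ← hP.dotProduct_mulVec_zero_iff,
    ← hQ.dotProduct_mulVec_zero_iff, add_mulVec, dotProduct_add]
  exact add_eq_zero_iff_of_nonneg (hP.dotProduct_mulVec_nonneg x) (hQ.dotProduct_mulVec_nonneg x)

theorem PosDef.conjTranspose_mul_mul_same_mulVec_eq_zero_iff [DecidableEq n] {C : Matrix n n 𝕜}
    (hC : C.PosDef) (B : Matrix n m 𝕜) (x : m → 𝕜) :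
    (Bᴴ * C * B) *ᵥ x = 0 ↔ B *ᵥ x = 0 := by
  rw [← (hC.posSemidef.conjTranspose_mul_mul_same B).dotProduct_mulVec_zero_iff,
    ← mulVec_mulVec, ← mulVec_mulVec, dotProduct_mulVec, vecMul_conjTranspose, star_star,
    hC.posSemidef.dotProduct_mulVec_zero_iff]
  exact (mulVec_injective_iff_isUnit.mpr hC.isUnit).eq_iff' (mulVec_zero C)

theorem PosSemidef.posDef_iff_forall_mulVec_eq_zero [DecidableEq n] {S : Matrix n n 𝕜}
    (hS : S.PosSemidef) : S.PosDef ↔ ∀ x, S *ᵥ x = 0 → x = 0 := by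
  rw [hS.posDef_iff_isUnit, ← mulVec_injective_iff_isUnit]
  exact injective_iff_map_eq_zero S.mulVecLin

theorem isUnit_fromBlocks_neg_iff_of_isUnit {α : Type*} [CommRing α] [DecidableEq m]
    [DecidableEq n] {A : Matrix m m α} (hA : IsUnit A) (B : Matrix m n α) (C : Matrix n m α)
    (D : Matrix n n α) :
    IsUnit (fromBlocks A B C (-D)) ↔ IsUnit (D + C * A⁻¹ * B) := by
  let := hA.invertible
  rw [isUnit_fromBlocks_iff_of_invertible₁₁, invOf_eq_nonsing_inv, ← neg_add', IsUnit.neg_iff]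

end Matrix

theorem saddle_point_invertible_iff_general (n m : ℕ)
    (A : Matrix (Fin n) (Fin n) ℝ) (E : Matrix (Fin m) (Fin m) ℝ)
    (B : Matrix (Fin n) (Fin m) ℝ)
    (hA : A.PosDef) (hE : E.PosSemidef) :
    (IsUnit (Matrix.fromBlocks A B Bᵀ (-E)) ↔ (E + Bᵀ * A⁻¹ * B).PosDef)
    ∧ (IsUnit (Matrix.fromBlocks A B Bᵀ (-E)) ↔
        ∀ p : Fin m → ℝ, E.mulVec p = 0 → B.mulVec p = 0 → p = 0) := by
  have hBt : Bᵀ = Bᴴ := (conjTranspose_eq_transpose_of_trivial B).symm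
  have hM : (Bᴴ * A⁻¹ * B).PosSemidef := hA.inv.posSemidef.conjTranspose_mul_mul_same B
  have hS : (E + Bᵀ * A⁻¹ * B).PosSemidef := hBt ▸ hE.add hM
  have hker (p : Fin m → ℝ) : (E + Bᵀ * A⁻¹ * B) *ᵥ p = 0 ↔ E *ᵥ p = 0 ∧ B *ᵥ p = 0 := by
    rw [hBt, hE.add_mulVec_eq_zero_iff hM, hA.inv.conjTranspose_mul_mul_same_mulVec_eq_zero_iff]
  have hunit : IsUnit (fromBlocks A B Bᵀ (-E)) ↔ (E + Bᵀ * A⁻¹ * B).PosDef :=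
    (isUnit_fromBlocks_neg_iff_of_isUnit hA.isUnit B Bᵀ E).trans hS.posDef_iff_isUnit.symm
  refine ⟨hunit, hunit.trans ?_⟩
  simp_rw [hS.posDef_iff_forall_mulVec_eq_zero, hker, and_imp]

/-- For A symmetric positive definite, E symmetric positive semidefinite and
B arbitrary, the saddle point matrix 𝒜 = [[A, B], [Bᵀ, −E]] is invertible iff the Schur
complement E + Bᵀ A⁻¹ B is positive definite, iff there is no nonzero p with Ep = 0 and
Bp = 0. -/
theorem saddle_point_invertible_iff (n m : ℕ) (hn : 0 < n) (hm : 0 < m)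
    (A : Matrix (Fin n) (Fin n) ℝ) (E : Matrix (Fin m) (Fin m) ℝ)
    (B : Matrix (Fin n) (Fin m) ℝ)
    (hA : A.PosDef) (hE : E.PosSemidef) :
    (IsUnit (Matrix.fromBlocks A B Bᵀ (-E)) ↔ (E + Bᵀ * A⁻¹ * B).PosDef)
    ∧ (IsUnit (Matrix.fromBlocks A B Bᵀ (-E)) ↔
        ∀ p : Fin m → ℝ, E.mulVec p = 0 → B.mulVec p = 0 → p = 0) :=
  saddle_point_invertible_iff_general n m A E B hA hE
end
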